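/- Let K be any finite field with exactly 16 elements and let z ∈ K satisfy z⁵ = 1 and z ≠ 1. Then the elliptic curve over K given by the Weierstrass equation y² + (z+1)xy + y = x³ + (z²+1)x² + z²x has exactly 18 points, including the point at infinity. Hence its trace of Frobenius is 16 + 1 − 18 = −1. -/
import Mathlib

namespace PointCount701

/-- Elements of `𝔽₁₆` as bit vectors `(a,b,c,d)` representing `a + b z + c z² + d z³`. -/
abbrev V : Type := Bool × Bool × Bool × Bool

def addV (u v : V) : V :=
  (xor u.1 v.1, xor u.2.1 v.2.1, xor u.2.2.1 v.2.2.1, xor u.2.2.2 v.2.2.2)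

/-- Multiplication of bit vectors, reducing via `z⁴ = z³+z²+z+1`, `z⁵ = 1`, `z⁶ = z`. -/
def mulV (u v : V) : V :=
  (xor (xor (u.1 && v.1) (xor (xor (u.2.1 && v.2.2.2) (u.2.2.1 && v.2.2.1)) (u.2.2.2 && v.2.1)))
      (xor (u.2.2.1 && v.2.2.2) (u.2.2.2 && v.2.2.1)),
   xor (xor (xor (u.1 && v.2.1) (u.2.1 && v.1))
        (xor (xor (u.2.1 && v.2.2.2) (u.2.2.1 && v.2.2.1)) (u.2.2.2 && v.2.1)))
      (u.2.2.2 && v.2.2.2),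
   xor (xor (xor (u.1 && v.2.2.1) (u.2.1 && v.2.1)) (u.2.2.1 && v.1))
      (xor (xor (u.2.1 && v.2.2.2) (u.2.2.1 && v.2.2.1)) (u.2.2.2 && v.2.1)),
   xor (xor (xor (xor (u.1 && v.2.2.2) (u.2.1 && v.2.2.1)) (u.2.2.1 && v.2.1)) (u.2.2.2 && v.1))
      (xor (xor (u.2.1 && v.2.2.2) (u.2.2.1 && v.2.2.1)) (u.2.2.2 && v.2.1)))

def zV : V := (false, true, false, false)
def oneV : V := (true, false, false, false)

def lhsV (u v : V) : V :=
  addV (mulV v v) (addV (mulV (addV zV oneV) (mulV u v)) v)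

def rhsV (u : V) : V :=
  addV (mulV u (mulV u u)) (addV (mulV (addV (mulV zV zV) oneV) (mulV u u)) (mulV (mulV zV zV) u))

def SF : Finset (V × V) := Finset.univ.filter (fun q => lhsV q.1 q.2 = rhsV q.1)

variable {K : Type*} [Field K]

def gB : Bool → K
  | false => 0
  | true => 1

def phiB (z : K) (u : V) : K :=
  gB u.1 + gB u.2.1 * z + gB u.2.2.1 * z ^ 2 + gB u.2.2.2 * z ^ 3

end PointCount701

open PointCount701

/-- Let `K` be a field with `16` elements and `z ∈ K` with `z⁵ = 1`, `z ≠ 1`.  The Weierstrass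
curve `y² + (z+1)xy + y = x³ + (z²+1)x² + z²x` over `K` has exactly `18` points, counting the
point at infinity; hence its trace of Frobenius is `16 + 1 − 18 = −1`. -/
theorem point_count_701_at_p2 {K : Type*} [Field K] [Fintype K] (hK : Fintype.card K = 16)
    (z : K) (hz5 : z ^ 5 = 1) (hz : z ≠ 1) :
    Nat.card {P : K × K |
      WeierstrassCurve.Affine.Equation ⟨z + 1, z ^ 2 + 1, 1, z ^ 2, 0⟩ P.1 P.2} + 1 = 18 ∧
    (16 + 1 - 18 : ℤ) = -1 := by
  refine ⟨?_, by norm_num⟩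
  -- basic facts about `K` and `z`
  have h16 : (16 : K) = 0 := by
    have h := FiniteField.cast_card_eq_zero K
    rw [hK] at h
    exact_mod_cast h
  have h2 : (2 : K) = 0 := by
    have h4 : (2 : K) ^ 4 = 0 := by norm_num; linear_combination h16
    exact pow_eq_zero_iff (by norm_num) |>.mp h4
  have hz0 : z ≠ 0 := by
    intro h
    exact one_ne_zero (α := K) (by rw [← hz5, h]; ring)
  have hΦ : z ^ 4 + z ^ 3 + z ^ 2 + z + 1 = 0 := by
    have hfac : (z - 1) * (z ^ 4 + z ^ 3 + z ^ 2 + z + 1) = 0 := by linear_combination hz5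
    rcases mul_eq_zero.mp hfac with h | h
    · exact absurd (by linear_combination h) hz
    · exact h
  have h4 : z ^ 4 = z ^ 3 + z ^ 2 + z + 1 := by
    linear_combination hΦ - (z ^ 3 + z ^ 2 + z + 1) * h2
  have h6 : z ^ 6 = z := by linear_combination z * hz5
  have hz2 : z ^ 2 ≠ 1 := fun h => hz (by linear_combination hz5 - (z ^ 3 + z) * h)
  have hz3 : z ^ 3 ≠ 1 := fun h => hz (by linear_combination (1 + z ^ 3) * h - z * hz5)
  -- `phiB z` is a (semi)ring-structure-preserving bijection
  have hgadd : ∀ a b : Bool, (gB (xor a b) : K) = gB a + gB b := by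
    intro a b
    cases a <;> cases b <;> simp [gB] <;> linear_combination -h2
  have hgmul : ∀ a b : Bool, (gB (a && b) : K) = gB a * gB b := by
    intro a b
    cases a <;> cases b <;> simp [gB]
  have hmul : ∀ u v : V, phiB z (mulV u v) = phiB z u * phiB z v := by
    rintro ⟨a, b, c, d⟩ ⟨e, f, g, h⟩
    simp only [mulV, phiB, hgadd, hgmul]
    linear_combination (-(gB b * gB h + gB c * gB g + gB d * gB f : K)) * h4
      - (gB c * gB h + gB d * gB g : K) * hz5 - (gB d * gB h : K) * h6
  have hadd : ∀ u v : V, phiB z (addV u v) = phiB z u + phiB z v := by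
    rintro ⟨a, b, c, d⟩ ⟨e, f, g, h⟩
    simp only [addV, phiB, hgadd]
    ring
  have hone : phiB z oneV = 1 := by simp [phiB, oneV, gB]
  have hzz : phiB z zV = z := by simp [phiB, zV, gB]
  have h0V : ∀ u : V, phiB z u = 0 → u = (false, false, false, false) := by
    rintro ⟨a, b, c, d⟩ hw
    cases a <;> cases b <;> cases c <;> cases d <;> simp only [phiB, gB] at hw ⊢ <;>
      first
      | rfl
      | exact absurd (by linear_combination hw) hz0
      | exact absurd (by linear_combination hw) (one_ne_zero : (1 : K) ≠ 0)
      | exact absurd (by linear_combination hw - h2) hz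
      | exact absurd (by linear_combination hw - h2) hz2
      | exact absurd (by linear_combination hw - h2) hz3
      | exact absurd (by linear_combination z ^ 3 * hw - hz5) (one_ne_zero : (1 : K) ≠ 0)
      | exact absurd (by linear_combination z ^ 2 * hw - hz5) (one_ne_zero : (1 : K) ≠ 0)
      | exact absurd (by linear_combination (1 + z + z ^ 2 + z ^ 3) * hw + hz5
          + (-(z ^ 2) - z ^ 3 - z ^ 4 - z ^ 5) * h2) hz
      | exact absurd (by linear_combination (1 + z ^ 2) * hw + hz5
          + (-(z ^ 3) - z ^ 5) * h2) hz
      | exact absurd (by linear_combination z ^ 3 * hw + (1 + z) * hz5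
          + (z - z ^ 5 - z ^ 6) * h2) hz
      | exact absurd (by linear_combination (1 + z) * hw - (1 + z + z ^ 2) * h2) hz3
      | exact absurd (by linear_combination (z + z ^ 2 + z ^ 3) * hw + (1 + z) * hz5
          + (1 - z ^ 2 - z ^ 3 - z ^ 4 - z ^ 5 - z ^ 6) * h2) (one_ne_zero : (1 : K) ≠ 0)
      | exact absurd (by linear_combination (1 + z + z ^ 4) * hw + (z + z ^ 2) * hz5
          + (-(z ^ 3) - z ^ 4 - z ^ 6 - z ^ 7) * h2) (one_ne_zero : (1 : K) ≠ 0)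
      | exact absurd (by linear_combination (1 + z + z ^ 3) * hw + (1 + z) * hz5
          + (1 - z ^ 2 - z ^ 3 - z ^ 4 - z ^ 5 - z ^ 6) * h2) (one_ne_zero : (1 : K) ≠ 0)
      | exact absurd (by linear_combination z * hΦ - z * hw - hz5) (one_ne_zero : (1 : K) ≠ 0)
  -- injectivity and surjectivity of `phiB z`
  have haddcancel : ∀ u v : V, addV u v = (false, false, false, false) → u = v := by decide
  have hinj : Function.Injective (phiB z : V → K) := by
    intro u v huv
    have h' : phiB z (addV u v) = 0 := by
      rw [hadd, huv]; linear_combination phiB z v * h2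
    exact haddcancel u v (h0V _ h')
  have hbij : Function.Bijective (phiB z : V → K) :=
    (Fintype.bijective_iff_injective_and_card _).mpr ⟨hinj, by rw [hK]; decide⟩
  -- transfer of the Weierstrass equation
  have hEquiv : ∀ x y : K,
      WeierstrassCurve.Affine.Equation ⟨z + 1, z ^ 2 + 1, 1, z ^ 2, 0⟩ x y ↔
        y ^ 2 + (z + 1) * x * y + y = x ^ 3 + (z ^ 2 + 1) * x ^ 2 + z ^ 2 * x := by
    intro x y
    rw [WeierstrassCurve.Affine.equation_iff]
    constructor <;> intro h <;> linear_combination h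
  have hl : ∀ u v : V, phiB z (lhsV u v) =
      phiB z v ^ 2 + (z + 1) * phiB z u * phiB z v + phiB z v := by
    intro u v
    simp only [lhsV, hadd, hmul, hzz, hone]
    ring
  have hr : ∀ u : V, phiB z (rhsV u) =
      phiB z u ^ 3 + (z ^ 2 + 1) * phiB z u ^ 2 + z ^ 2 * phiB z u := by
    intro u
    simp only [rhsV, hadd, hmul, hzz, hone]
    ring
  have hkey : ∀ u v : V,
      (WeierstrassCurve.Affine.Equation ⟨z + 1, z ^ 2 + 1, 1, z ^ 2, 0⟩ (phiB z u) (phiB z v) ↔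
        (u, v) ∈ SF) := by
    intro u v
    rw [hEquiv]
    constructor
    · intro h
      have : phiB z (lhsV u v) = phiB z (rhsV u) := by rw [hl, hr]; linear_combination h
      simp only [SF, Finset.mem_filter, Finset.mem_univ, true_and]
      exact hinj this
    · intro h
      simp only [SF, Finset.mem_filter, Finset.mem_univ, true_and] at h
      have := congrArg (phiB z) h
      rw [hl, hr] at this
      linear_combination this
  -- the solution set is the image of `SF`
  have himage : {P : K × K |
      WeierstrassCurve.Affine.Equation ⟨z + 1, z ^ 2 + 1, 1, z ^ 2, 0⟩ P.1 P.2}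
      = (fun q : V × V => (phiB z q.1, phiB z q.2)) '' ↑SF := by
    ext P
    simp only [Set.mem_setOf_eq, Set.mem_image, Finset.mem_coe]
    constructor
    · intro hxy
      obtain ⟨u, hu⟩ := hbij.2 P.1
      obtain ⟨v, hv⟩ := hbij.2 P.2
      refine ⟨(u, v), (hkey u v).mp ?_, ?_⟩
      · rw [hu, hv]; exact hxy
      · exact Prod.ext hu hv
    · rintro ⟨⟨u, v⟩, hmem, rfl⟩
      exact (hkey u v).mpr hmem
  have hpinj : Function.Injective (fun q : V × V => (phiB z q.1, phiB z q.2)) := by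
    rintro ⟨u1, u2⟩ ⟨v1, v2⟩ hq
    simp only [Prod.mk.injEq] at hq
    exact Prod.ext (hinj hq.1) (hinj hq.2)
  rw [himage, Nat.card_coe_set_eq, Set.ncard_image_of_injective _ hpinj,
    Set.ncard_coe_finset]
  decide
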